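/- Let G be an instance of the MST problem under explorable uncertainty with unique lower and upper limit trees satisfying T_L = T_U, and let G' be the instance obtained from G by querying a set Q of edges, with unique limit trees T_L' = T_U'. Then every edge e in the symmetric difference T_L Δ T_L' = (T_L ∖ T_L') ∪ (T_L' ∖ T_L) satisfies e ∈ Q. -/

import Mathlib

/-!
Common framework: the minimum spanning tree problem under explorable
uncertainty with (untrusted) predictions.
-/

open scoped BigOperators
open scoped Classical

noncomputable section

/-- An instance of the MST problem under explorable uncertainty with predictions:
a connected (multi)graph whose edges carry uncertainty intervals (open `(L,U)` for
non-trivial edges, i.e. `L < U`, and the singleton `{L}` for trivial edges, i.e. `L = U`)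
together with predicted values `pw e` lying in the intervals. -/
structure UncGraph where
  V : Type
  E : Type
  fintV : Fintype V
  fintE : Fintype E
  decV : DecidableEq V
  decE : DecidableEq E
  ends : E → Sym2 V
  conn : ∀ u v : V, Relation.ReflTransGen (fun a b => ∃ e : E, ends e = s(a, b)) u v
  L : E → ℝ
  U : E → ℝ
  LU : ∀ e, L e ≤ U e
  pw : E → ℝ
  pw_mem : ∀ e, (L e = U e ∧ pw e = L e) ∨ (L e < pw e ∧ pw e < U e)

attribute [instance] UncGraph.fintV UncGraph.fintE UncGraph.decV UncGraph.decE

namespace UncGraph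

variable (G : UncGraph)

/-- The uncertainty interval of an edge: the open interval `(L e, U e)` for a
non-trivial edge, the singleton `{L e}` for a trivial edge (`L e = U e`). -/
def I (e : G.E) : Set ℝ :=
  {x | (G.L e = G.U e ∧ x = G.L e) ∨ (G.L e < x ∧ x < G.U e)}

/-- A trivial edge: its interval is a singleton. -/
def TrivialEdge (e : G.E) : Prop := G.L e = G.U e

/-- A non-trivial edge: its interval is a nonempty open interval. -/
def NontrivialEdge (e : G.E) : Prop := G.L e < G.U e

/-- `w` is a valid realization of true edge weights. -/
def Valid (w : G.E → ℝ) : Prop := ∀ e, w e ∈ G.I e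

/-- Connectivity of two vertices using only edges from `S`. -/
def ConnectsVia (S : Finset G.E) (u v : G.V) : Prop :=
  Relation.ReflTransGen (fun a b => ∃ e ∈ S, G.ends e = s(a, b)) u v

/-- `S` is a spanning tree: it connects all vertices and has `|V| - 1` edges. -/
def IsSpanningTree (S : Finset G.E) : Prop :=
  (∀ u v : G.V, G.ConnectsVia S u v) ∧ S.card + 1 = Fintype.card G.V

/-- `T` is a minimum spanning tree with respect to the weight function `wf`. -/
def IsMST (wf : G.E → ℝ) (T : Finset G.E) : Prop :=
  G.IsSpanningTree T ∧ ∀ T', G.IsSpanningTree T' → ∑ e ∈ T, wf e ≤ ∑ e ∈ T', wf e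

/-- `wf` agrees with the true values `w` on the queried set `Q` and lies in the
uncertainty intervals elsewhere. -/
def Compatible (w : G.E → ℝ) (Q : Finset G.E) (wf : G.E → ℝ) : Prop :=
  (∀ e ∈ Q, wf e = w e) ∧ ∀ e, wf e ∈ G.I e

/-- The query set `Q` verifies `T`: `T` is an MST for every weight function
compatible with the revealed values. -/
def Verifies (w : G.E → ℝ) (Q T : Finset G.E) : Prop :=
  ∀ wf, G.Compatible w Q wf → G.IsMST wf T

/-- `Q` is a feasible query set for true values `w`. -/
def Feasible (w : G.E → ℝ) (Q : Finset G.E) : Prop :=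
  ∃ T, G.Verifies w Q T

/-- The minimum cardinality of a feasible query set. -/
def optCost (w : G.E → ℝ) : ℕ :=
  sInf {n | ∃ Q, G.Feasible w Q ∧ Q.card = n}

/-- `Q` is an optimal (minimum-cardinality feasible) query set. -/
def IsOptimal (w : G.E → ℝ) (Q : Finset G.E) : Prop :=
  G.Feasible w Q ∧ ∀ Q', G.Feasible w Q' → Q.card ≤ Q'.card

/-- An edge is mandatory if it belongs to every feasible query set. -/
def Mandatory (w : G.E → ℝ) (e : G.E) : Prop :=
  ∀ Q, G.Feasible w Q → e ∈ Q

/-- A witness set intersects every feasible query set. -/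
def IsWitnessSet (w : G.E → ℝ) (W : Finset G.E) : Prop :=
  ∀ Q, G.Feasible w Q → ∃ e ∈ W, e ∈ Q

/-- An edge is prediction mandatory if it is mandatory under the assumption that
all queries return the predicted values. -/
def PredMandatory (e : G.E) : Prop := G.Mandatory G.pw e

/-- An instance is prediction mandatory free if it has no prediction mandatory edge. -/
def PredMandatoryFree : Prop := ∀ e, ¬ G.PredMandatory e

/-- Hop-distance indicator `k_{e'}(e)`: `0` if the prediction `p e` has the same
relation to the interval `I e'` as the true value `w e` (both `≤ L e'`, both
`≥ U e'`, or both strictly inside), and `1` otherwise. -/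
def kErr (p w : G.E → ℝ) (e e' : G.E) : ℕ :=
  if (p e ≤ G.L e' ∧ w e ≤ G.L e') ∨ (G.U e' ≤ p e ∧ G.U e' ≤ w e) ∨
      (G.L e' < p e ∧ p e < G.U e' ∧ G.L e' < w e ∧ w e < G.U e')
  then 0 else 1

/-- `h→(e) = Σ_{e' ≠ e} k_{e'}(e)`. -/
def hright (p w : G.E → ℝ) (e : G.E) : ℕ :=
  ∑ e' ∈ Finset.univ.erase e, G.kErr p w e e'

/-- `h←(e) = Σ_{e' ≠ e} k_e(e')`. -/
def hleft (p w : G.E → ℝ) (e : G.E) : ℕ :=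
  ∑ e' ∈ Finset.univ.erase e, G.kErr p w e' e

/-- `h→(E') = Σ_{e ∈ E'} h→(e)`. -/
def hrightSum (p w : G.E → ℝ) (S : Finset G.E) : ℕ := ∑ e ∈ S, G.hright p w e

/-- `h←(E') = Σ_{e ∈ E'} h←(e)`. -/
def hleftSum (p w : G.E → ℝ) (S : Finset G.E) : ℕ := ∑ e ∈ S, G.hleft p w e

/-- The hop distance of prediction `p` for realization `w`. -/
def hopDist (p w : G.E → ℝ) : ℕ := ∑ e, G.hright p w e

/-- The hop distance `k_h` of the instance's predictions for realization `w`. -/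
def khop (w : G.E → ℝ) : ℕ := G.hopDist G.pw w

/-- Lower-limit weights `w^L`: `L e + ε` for non-trivial edges, the known value
for trivial edges. -/
def lowerWeight (ε : ℝ) (e : G.E) : ℝ := if G.L e = G.U e then G.L e else G.L e + ε

/-- Upper-limit weights `w^U`: `U e - ε` for non-trivial edges, the known value
for trivial edges. -/
def upperWeight (ε : ℝ) (e : G.E) : ℝ := if G.L e = G.U e then G.L e else G.U e - ε

/-- `T` is a lower limit tree: an MST for `w^L` for all sufficiently small `ε > 0`. -/
def IsLowerLimitTree (T : Finset G.E) : Prop :=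
  ∃ ε₀ > (0 : ℝ), ∀ ε : ℝ, 0 < ε → ε < ε₀ → G.IsMST (G.lowerWeight ε) T

/-- `T` is an upper limit tree: an MST for `w^U` for all sufficiently small `ε > 0`. -/
def IsUpperLimitTree (T : Finset G.E) : Prop :=
  ∃ ε₀ > (0 : ℝ), ∀ ε : ℝ, 0 < ε → ε < ε₀ → G.IsMST (G.upperWeight ε) T

/-- `T` is simultaneously the unique lower limit tree and the unique upper
limit tree (`T_L = T_U`, both unique). -/
def UniqueLimitTrees (T : Finset G.E) : Prop :=
  G.IsLowerLimitTree T ∧ G.IsUpperLimitTree T ∧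
  (∀ T', G.IsLowerLimitTree T' → T' = T) ∧
  (∀ T', G.IsUpperLimitTree T' → T' = T)

/-- Number of edge-ends of `S` incident to `v` (loops count twice). -/
def incCount (S : Finset G.E) (v : G.V) : ℕ :=
  ∑ e ∈ S, (if G.ends e = s(v, v) then 2 else if v ∈ G.ends e then 1 else 0)

/-- `S` forms a single cycle: nonempty, every vertex has degree `0` or `2`,
and the support is connected. -/
def IsCycle (S : Finset G.E) : Prop :=
  S.Nonempty ∧ (∀ v, G.incCount S v = 0 ∨ G.incCount S v = 2) ∧
  ∀ u v, G.incCount S u ≠ 0 → G.incCount S v ≠ 0 → G.ConnectsVia S u v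

/-- `C` is the cycle closed by adding the edge `f` to the tree `T`. -/
def IsCycleOf (T : Finset G.E) (f : G.E) (C : Finset G.E) : Prop :=
  G.IsCycle C ∧ f ∈ C ∧ C ⊆ insert f T

/-- `e'` lies in the cut `X_e` between the two components of `T \ {e}`. -/
def InCut (T : Finset G.E) (e e' : G.E) : Prop :=
  ∀ u v : G.V, G.ends e' = s(u, v) → ¬ G.ConnectsVia (T.erase e) u v

/-- `S` is a path between the (distinct) vertices `a` and `b`. -/
def IsPathBetween (S : Finset G.E) (a b : G.V) : Prop :=
  a ≠ b ∧ G.incCount S a = 1 ∧ G.incCount S b = 1 ∧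
  (∀ v, v ≠ a → v ≠ b → G.incCount S v = 0 ∨ G.incCount S v = 2) ∧
  ∀ v, G.incCount S v ≠ 0 → G.ConnectsVia S a v

/-- `{f, l}` is an edge of the vertex cover instance `Ḡ` (w.r.t. the tree `T`):
`f ∉ T`, `l ≠ f` lies on the cycle closed by `f`, both are non-trivial, and
their intervals intersect. -/
def VCEdge (T : Finset G.E) (f l : G.E) : Prop :=
  f ∉ T ∧ l ≠ f ∧ G.NontrivialEdge f ∧ G.NontrivialEdge l ∧
  (∃ C, G.IsCycleOf T f C ∧ l ∈ C) ∧ (G.I f ∩ G.I l).Nonempty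

/-- Adjacency in the vertex cover instance `Ḡ` (symmetrized). -/
def VCAdj (T : Finset G.E) (a b : G.E) : Prop := G.VCEdge T a b ∨ G.VCEdge T b a

/-- `S` is a vertex cover of the vertex cover instance `Ḡ`. -/
def IsVCCover (T S : Finset G.E) : Prop :=
  ∀ a b, G.VCAdj T a b → a ∈ S ∨ b ∈ S

/-- `S` is a minimum vertex cover of the vertex cover instance `Ḡ`. -/
def IsMinVC (T S : Finset G.E) : Prop :=
  G.IsVCCover T S ∧ ∀ S', G.IsVCCover T S' → S.card ≤ S'.card

/-- Edge `e` does not occur in the instance anymore: independently of the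
remaining uncertainty it can be deleted (some MST avoids it, for every
realization) or contracted (some MST contains it, for every realization). -/
def Removable (e : G.E) : Prop :=
  (∀ wf : G.E → ℝ, (∀ e', wf e' ∈ G.I e') → ∃ T, G.IsMST wf T ∧ e ∉ T) ∨
  (∀ wf : G.E → ℝ, (∀ e', wf e' ∈ G.I e') → ∃ T, G.IsMST wf T ∧ e ∈ T)

end UncGraph

/-- The instance obtained from `G` by querying the edges of `Q` under true
values `w`: the intervals of queried edges collapse to the revealed values. -/
def UncGraph.restrict (G : UncGraph) (w : G.E → ℝ) (Q : Finset G.E) : UncGraph where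
  V := G.V
  E := G.E
  fintV := G.fintV
  fintE := G.fintE
  decV := G.decV
  decE := G.decE
  ends := G.ends
  conn := G.conn
  L := fun e => if e ∈ Q then w e else G.L e
  U := fun e => if e ∈ Q then w e else G.U e
  LU := fun e => by by_cases h : e ∈ Q <;> simp [h, G.LU e]
  pw := fun e => if e ∈ Q then w e else G.pw e
  pw_mem := fun e => by
    by_cases h : e ∈ Q
    · simp [h]
    · simpa [h] using G.pw_mem e

/-- A deterministic adaptive query algorithm: given the instance and the set of
already queried edges together with the revealed values, it either picks the next
edge to query or stops (`none`).  The lawfulness condition states that the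
decision may only depend on the revealed values of already queried edges. -/
structure Algorithm where
  next : ∀ G : UncGraph, Finset G.E → (G.E → ℝ) → Option G.E
  lawful : ∀ (G : UncGraph) (Q : Finset G.E) (w w' : G.E → ℝ),
    (∀ e ∈ Q, w e = w' e) → next G Q w = next G Q w'

namespace Algorithm

/-- The set of edges queried by `A` after `n` steps, on instance `G` with true
values `w`; the algorithm stops as soon as the queried set is feasible. -/
def runQueries (A : Algorithm) (G : UncGraph) (w : G.E → ℝ) : ℕ → Finset G.E
  | 0 => ∅
  | n + 1 =>
    let Q := A.runQueries G w n
    if G.Feasible w Q then Q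
    else
      match A.next G Q w with
      | some e => insert e Q
      | none => Q

/-- The final query set of the run of `A`. -/
def finalQueries (A : Algorithm) (G : UncGraph) (w : G.E → ℝ) : Finset G.E :=
  A.runQueries G w (Fintype.card G.E + 1)

/-- The number of queries made by `A` on instance `G` with true values `w`. -/
def algCost (A : Algorithm) (G : UncGraph) (w : G.E → ℝ) : ℕ :=
  (A.finalQueries G w).card

/-- `A` solves every instance: it always ends with a feasible query set. -/
def Solves (A : Algorithm) : Prop :=
  ∀ (G : UncGraph) (w : G.E → ℝ), G.Valid w → G.Feasible w (A.finalQueries G w)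

/-- `A` is `α`-consistent: on instances with correct predictions it makes at
most `α · |OPT|` queries. -/
def Consistent (A : Algorithm) (α : ℝ) : Prop :=
  ∀ G : UncGraph, (A.algCost G G.pw : ℝ) ≤ α * (G.optCost G.pw : ℝ)

/-- `A` is `β`-robust: it makes at most `β · |OPT|` queries on every instance. -/
def Robust (A : Algorithm) (β : ℝ) : Prop :=
  ∀ (G : UncGraph) (w : G.E → ℝ), G.Valid w → (A.algCost G w : ℝ) ≤ β * (G.optCost w : ℝ)

/-- Run of a preprocessing algorithm: it stops exactly when `next` returns
`none` (rather than when the queried set is feasible). -/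
def runPre (A : Algorithm) (G : UncGraph) (w : G.E → ℝ) : ℕ → Finset G.E
  | 0 => ∅
  | n + 1 =>
    let Q := A.runPre G w n
    match A.next G Q w with
    | some e => insert e Q
    | none => Q

/-- The final query set of a preprocessing run of `A`. -/
def preQueries (A : Algorithm) (G : UncGraph) (w : G.E → ℝ) : Finset G.E :=
  A.runPre G w (Fintype.card G.E + 1)

end Algorithm

/-!
Suppose `e ∈ T \ T'` is not queried. Symmetric exchange gives `f ∈ T' \ T` such that both
`T - e + f` and `T' - f + e` are spanning trees. Uniqueness of the lower limit trees makes both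
exchanges strictly worse for small `ε`: `w^L(e) < w^L(f)` in `G` and `w'^L(f) < w'^L(e)` in `G'`.
Querying can only raise lower limit weights (the revealed values lie in the intervals) and leaves
`w^L(e)` unchanged, a contradiction. The case `e ∈ T' \ T` is the same with upper limit weights,
which querying can only lower.

Uniqueness yields strict inequalities because tree weights are affine in `ε`: a tree tying with
the limit tree at one small `ε` ties with it on a whole interval, so it is a limit tree as well.
-/

open Filter Topology

theorem eventually_nhdsGT_zero_iff {p : ℝ → Prop} :
    (∀ᶠ ε in 𝓝[>] 0, p ε) ↔ ∃ ε₀ > (0 : ℝ), ∀ ε, 0 < ε → ε < ε₀ → p ε := by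
  simp only [Filter.Eventually, mem_nhdsGT_iff_exists_Ioo_subset, Set.subset_def, Set.mem_Ioo,
    Set.mem_Ioi, Set.mem_ofPred_eq, and_imp, gt_iff_lt]

theorem eventually_pos_of_jensen {h : ℝ → ℝ} (hjensen : ∀ a b, h a + h b = 2 * h ((a + b) / 2))
    (hnonneg : ∀ᶠ ε in 𝓝[>] 0, 0 ≤ h ε) (hne : ¬ ∀ᶠ ε in 𝓝[>] 0, h ε = 0) :
    ∀ᶠ ε in 𝓝[>] 0, 0 < h ε := by
  obtain ⟨ε₀, hε₀, hnonneg⟩ := eventually_nhdsGT_zero_iff.1 hnonneg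
  refine eventually_nhdsGT_zero_iff.2 ⟨ε₀ / 2, by positivity, fun ε hε hεε₀ => ?_⟩
  refine (hnonneg ε hε (by linarith)).lt_of_ne' fun hzero => hne ?_
  -- `h ε' + h (2ε - ε') = 2 h ε = 0` with both summands nonnegative.
  refine eventually_nhdsGT_zero_iff.2 ⟨2 * ε, by positivity, fun ε' h0 h2 => ?_⟩
  have hsum := hjensen ε' (2 * ε - ε')
  rw [show (ε' + (2 * ε - ε')) / 2 = ε by ring, hzero] at hsum
  linarith [hnonneg ε' h0 (by linarith), hnonneg (2 * ε - ε') (by linarith) (by linarith)]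

namespace UncGraph

variable {G : UncGraph} {S A B : Finset G.E} {e f : G.E} {u v x y p q : G.V}

theorem ConnectsVia.of_mem (he : e ∈ S) (hends : G.ends e = s(u, v)) : G.ConnectsVia S u v :=
  .single ⟨e, he, hends⟩

theorem ConnectsVia.trans (huv : G.ConnectsVia S u v) (hvx : G.ConnectsVia S v x) :
    G.ConnectsVia S u x :=
  Relation.ReflTransGen.trans huv hvx

theorem ConnectsVia.symm (h : G.ConnectsVia S u v) : G.ConnectsVia S v u := by
  induction h with
  | refl => exact .refl
  | tail _ hstep ih =>
    obtain ⟨e, he, hends⟩ := hstep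
    exact (ConnectsVia.of_mem he (by rw [hends, Sym2.eq_swap])).trans ih

theorem ConnectsVia.mono (hS : S ⊆ A) (h : G.ConnectsVia S u v) : G.ConnectsVia A u v :=
  Relation.ReflTransGen.mono (fun _ _ ⟨e, he, hends⟩ => ⟨e, hS he, hends⟩) _ _ h

theorem ConnectsVia.of_insert (hf : G.ends f = s(p, q)) (h : G.ConnectsVia (insert f S) u v) :
    G.ConnectsVia S u v ∨ G.ConnectsVia S p v ∨ G.ConnectsVia S q v := by
  induction h with
  | refl => exact .inl .refl
  | @tail a b _ hstep ih =>
    obtain ⟨g, hg, hends⟩ := hstep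
    rcases Finset.mem_insert.1 hg with rfl | hg
    · rcases Sym2.eq_iff.1 (hf.symm.trans hends) with ⟨-, rfl⟩ | ⟨rfl, -⟩
      · exact .inr (.inr .refl)
      · exact .inr (.inl .refl)
    · have hab : G.ConnectsVia S a b := .of_mem hg hends
      exact ih.imp (·.trans hab) (Or.imp (·.trans hab) (·.trans hab))

theorem ConnectsVia.exists_crossing {R : G.V → Prop} (h : G.ConnectsVia S u v) (hu : R u)
    (hv : ¬ R v) : ∃ f ∈ S, ∃ p q, G.ends f = s(p, q) ∧ R p ∧ ¬ R q := by
  induction h with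
  | refl => exact absurd hu hv
  | @tail a b _ hstep ih =>
    obtain ⟨g, hg, hends⟩ := hstep
    by_cases ha : R a
    · exact ⟨g, hg, a, b, hends, ha, hv⟩
    · exact ih ha

theorem card_le_card_add_one_of_connectsVia (hS : ∀ u v, G.ConnectsVia S u v) :
    Fintype.card G.V ≤ S.card + 1 := by
  cases isEmpty_or_nonempty G.V
  · simp
  let H := SimpleGraph.fromEdgeSet (G.ends '' S)
  have hH : H.Connected := by
    refine ⟨fun u v => ?_⟩
    rw [SimpleGraph.reachable_iff_reflTransGen]
    induction hS u v with
    | refl => exact .refl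
    | @tail a b _ hstep ih =>
      obtain ⟨e, he, hends⟩ := hstep
      by_cases hab : a = b
      · exact hab ▸ ih
      · exact ih.tail ⟨⟨e, he, hends⟩, hab⟩
  calc Fintype.card G.V = Nat.card G.V := Nat.card_eq_fintype_card.symm
    _ ≤ Nat.card H.edgeSet + 1 := hH.card_vert_le_card_edgeSet_add_one
    _ ≤ S.card + 1 := by
      grw [Nat.card_coe_set_eq, SimpleGraph.edgeSet_fromEdgeSet,
        Set.ncard_le_ncard Set.sdiff_subset, Set.ncard_image_le, Set.ncard_coe_finset]

theorem connectsVia_erase_left_or_right (hS : ∀ u v, G.ConnectsVia S u v)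
    (he : G.ends e = s(x, y)) (v : G.V) :
    G.ConnectsVia (S.erase e) x v ∨ G.ConnectsVia (S.erase e) y v := by
  by_cases heS : e ∈ S
  · rw [← Finset.insert_erase heS] at hS
    rcases (hS x v).of_insert he with h | h | h
    exacts [.inl h, .inl h, .inr h]
  · exact .inl (by simpa [Finset.erase_eq_of_notMem heS] using hS x v)

namespace IsSpanningTree

theorem not_connectsVia_erase (hA : G.IsSpanningTree A) (he : e ∈ A)
    (hends : G.ends e = s(x, y)) : ¬ G.ConnectsVia (A.erase e) x y := by
  intro hxy
  have hconn : ∀ u v, G.ConnectsVia (A.erase e) u v := by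
    have hx : ∀ v, G.ConnectsVia (A.erase e) x v := fun v =>
      (connectsVia_erase_left_or_right hA.1 hends v).elim id hxy.trans
    exact fun u v => (hx u).symm.trans (hx v)
  have := card_le_card_add_one_of_connectsVia hconn
  have := Finset.card_erase_add_one he
  have := hA.2
  omega

theorem insert_erase (hA : G.IsSpanningTree A) (he : e ∈ A) (hends : G.ends e = s(x, y))
    (hf : f ∉ A) (hxy : G.ConnectsVia (insert f (A.erase e)) x y) :
    G.IsSpanningTree (insert f (A.erase e)) := by
  have hsub : A.erase e ⊆ insert f (A.erase e) := Finset.subset_insert _ _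
  have hx : ∀ v, G.ConnectsVia (insert f (A.erase e)) x v := fun v =>
    (connectsVia_erase_left_or_right hA.1 hends v).elim (·.mono hsub) (hxy.trans <| ·.mono hsub)
  refine ⟨fun u v => (hx u).symm.trans (hx v), ?_⟩
  rw [Finset.card_insert_of_notMem (fun h => hf (Finset.mem_of_mem_erase h)),
    Finset.card_erase_add_one he, hA.2]

theorem exists_exchange (hA : G.IsSpanningTree A) (hB : G.IsSpanningTree B) (heA : e ∈ A)
    (heB : e ∉ B) : ∃ f ∈ B, f ∉ A ∧ G.IsSpanningTree (insert f (A.erase e)) ∧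
      G.IsSpanningTree (insert e (B.erase f)) := by
  obtain ⟨⟨x, y⟩, hxy⟩ := Sym2.mk_surjective (G.ends e)
  replace hxy : G.ends e = s(x, y) := hxy.symm
  -- A minimal `S ⊆ B` joining `x` and `y` is the `B`-path between them; `f` is an edge of it
  -- crossing the cut of `A - e`.
  obtain ⟨S, hS, hSmin⟩ := ((B.powerset.filter fun S => G.ConnectsVia S x y)).exists_min_image
    Finset.card ⟨B, by simpa using hB.1 x y⟩
  obtain ⟨hSB, hSxy⟩ : S ⊆ B ∧ G.ConnectsVia S x y := by simpa using hS
  obtain ⟨f, hfS, p, q, hpq, hxp, hxq⟩ :=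
    hSxy.exists_crossing (R := G.ConnectsVia (A.erase e) x) .refl
      (hA.not_connectsVia_erase heA hxy)
  have hfB : f ∈ B := hSB hfS
  have hfA : f ∉ A := fun hfA => hxq <| hxp.trans <|
    .of_mem (Finset.mem_erase.2 ⟨fun hfe => heB (hfe ▸ hfB), hfA⟩) hpq
  have hxy' : ¬ G.ConnectsVia (S.erase f) x y := fun h => by
    have := hSmin (S.erase f) (by simpa using ⟨(Finset.erase_subset f S).trans hSB, h⟩)
    have := Finset.card_erase_lt_of_mem hfS
    omega
  refine ⟨f, hfB, hfA, hA.insert_erase heA hxy hfA ?_, hB.insert_erase hfB hpq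
    (fun h => heB h) ?_⟩
  · have hqy : G.ConnectsVia (A.erase e) q y :=
      (connectsVia_erase_left_or_right hA.1 hxy q).elim (absurd · hxq) (·.symm)
    have hsub := Finset.subset_insert f (A.erase e)
    exact (hxp.mono hsub).trans <| (ConnectsVia.of_mem (Finset.mem_insert_self f _) hpq).trans <|
      hqy.mono hsub
  · have hsub : S.erase f ⊆ insert e (B.erase f) :=
      (Finset.erase_subset_erase f hSB).trans (Finset.subset_insert _ _)
    have hxyT : G.ConnectsVia (insert e (B.erase f)) x y :=
      .of_mem (Finset.mem_insert_self e _) hxy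
    rw [← Finset.insert_erase hfS] at hSxy
    have hy := (hSxy.of_insert hpq).resolve_left hxy'
    obtain hpx | hqx := (hSxy.symm.of_insert hpq).resolve_left (hxy' ·.symm)
    · obtain hpy | hqy := hy
      · exact absurd (hpx.symm.trans hpy) hxy'
      · exact (hpx.mono hsub).trans <| hxyT.trans (hqy.mono hsub).symm
    · obtain hpy | hqy := hy
      · exact (hpy.mono hsub).trans <| hxyT.symm.trans (hqx.mono hsub).symm
      · exact absurd (hqx.symm.trans hqy) hxy'

end IsSpanningTree

variable {W W' : ℝ → G.E → ℝ} {T T' : Finset G.E}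

variable (G) in
def IsLimitTree (W : ℝ → G.E → ℝ) (T : Finset G.E) : Prop :=
  ∀ᶠ ε in 𝓝[>] 0, G.IsMST (W ε) T

variable (G) in
def IsUniqueLimitTree (W : ℝ → G.E → ℝ) (T : Finset G.E) : Prop :=
  G.IsLimitTree W T ∧ ∀ S, G.IsLimitTree W S → S = T

theorem IsLimitTree.isSpanningTree (hT : G.IsLimitTree W T) : G.IsSpanningTree T :=
  let ⟨_, hε⟩ := hT.exists
  hε.1

theorem uniqueLimitTrees_iff :
    G.UniqueLimitTrees T ↔
      G.IsUniqueLimitTree G.lowerWeight T ∧ G.IsUniqueLimitTree G.upperWeight T := by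
  simp only [UniqueLimitTrees, IsLowerLimitTree, IsUpperLimitTree, IsUniqueLimitTree, IsLimitTree,
    eventually_nhdsGT_zero_iff]
  tauto

theorem IsLimitTree.eventually_sum_lt (hW : ∀ a b e, W a e + W b e = 2 * W ((a + b) / 2) e)
    (hT : G.IsLimitTree W T) (hS : G.IsSpanningTree S) (hST : ¬ G.IsLimitTree W S) :
    ∀ᶠ ε in 𝓝[>] 0, ∑ e ∈ T, W ε e < ∑ e ∈ S, W ε e := by
  have hpos := eventually_pos_of_jensen (h := fun ε => ∑ e ∈ S, W ε e - ∑ e ∈ T, W ε e)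
    (fun a b => by
      simp only [mul_sub, Finset.mul_sum, ← hW, Finset.sum_add_distrib]
      ring)
    (hT.mono fun ε hε => sub_nonneg.2 (hε.2 S hS))
    (fun h0 => hST <| (hT.and h0).mono fun ε ⟨hε, htie⟩ =>
      ⟨hS, fun S' hS' => (sub_eq_zero.1 htie).symm ▸ hε.2 S' hS'⟩)
  exact hpos.mono fun ε => sub_pos.1

theorem IsUniqueLimitTree.eventually_lt_of_exchange
    (hW : ∀ a b e, W a e + W b e = 2 * W ((a + b) / 2) e) (hT : G.IsUniqueLimitTree W T)
    (he : e ∈ T) (hf : f ∉ T) (hS : G.IsSpanningTree (insert f (T.erase e))) :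
    ∀ᶠ ε in 𝓝[>] 0, W ε e < W ε f := by
  refine (hT.1.eventually_sum_lt hW hS fun h => hf ?_).mono fun ε hε => ?_
  · exact hT.2 _ h ▸ Finset.mem_insert_self f _
  · rwa [Finset.sum_insert (fun h => hf (Finset.mem_of_mem_erase h)),
      ← Finset.add_sum_erase _ _ he, add_lt_add_iff_right] at hε

theorem IsUniqueLimitTree.mem_of_mem_of_le
    (hW : ∀ a b e, W a e + W b e = 2 * W ((a + b) / 2) e)
    (hW' : ∀ a b e, W' a e + W' b e = 2 * W' ((a + b) / 2) e)
    (hT : G.IsUniqueLimitTree W T) (hT' : G.IsUniqueLimitTree W' T')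
    (hle : ∀ᶠ ε in 𝓝[>] 0, ∀ f, W ε f ≤ W' ε f) (heq : ∀ ε, W' ε e = W ε e) (he : e ∈ T) :
    e ∈ T' := by
  by_contra he'
  obtain ⟨f, hfT', hfT, hTf, hT'e⟩ :=
    hT.1.isSpanningTree.exists_exchange hT'.1.isSpanningTree he he'
  obtain ⟨ε, hef, hfe, hle⟩ := ((hT.eventually_lt_of_exchange hW he hfT hTf).and
    ((hT'.eventually_lt_of_exchange hW' hfT' he' hT'e).and hle)).exists
  linarith [hle f, heq ε]

variable (G) in
theorem lowerWeight_add_lowerWeight (a b : ℝ) (e : G.E) :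
    G.lowerWeight a e + G.lowerWeight b e = 2 * G.lowerWeight ((a + b) / 2) e := by
  unfold lowerWeight
  split_ifs <;> ring

variable (G) in
theorem upperWeight_add_upperWeight (a b : ℝ) (e : G.E) :
    G.upperWeight a e + G.upperWeight b e = 2 * G.upperWeight ((a + b) / 2) e := by
  unfold upperWeight
  split_ifs <;> ring

theorem eventually_lowerWeight_le {r : ℝ} (hr : r ∈ G.I e) :
    ∀ᶠ ε in 𝓝[>] 0, G.lowerWeight ε e ≤ r := by
  rcases hr with ⟨hLU, rfl⟩ | ⟨hL, hU⟩
  · exact .of_forall fun ε => by simp [lowerWeight, hLU]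
  · refine eventually_nhdsGT_zero_iff.2 ⟨r - G.L e, sub_pos.2 hL, fun ε _ hε => ?_⟩
    unfold lowerWeight
    split_ifs <;> linarith

theorem eventually_le_upperWeight {r : ℝ} (hr : r ∈ G.I e) :
    ∀ᶠ ε in 𝓝[>] 0, r ≤ G.upperWeight ε e := by
  rcases hr with ⟨hLU, rfl⟩ | ⟨hL, hU⟩
  · exact .of_forall fun ε => by simp [upperWeight, hLU]
  · refine eventually_nhdsGT_zero_iff.2 ⟨G.U e - r, sub_pos.2 hU, fun ε _ hε => ?_⟩
    unfold upperWeight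
    split_ifs <;> linarith

theorem restrict_lowerWeight (w : G.E → ℝ) (Q : Finset G.E) (ε : ℝ) (e : G.E) :
    (G.restrict w Q).lowerWeight ε e = if e ∈ Q then w e else G.lowerWeight ε e := by
  by_cases he : e ∈ Q <;> simp [restrict, lowerWeight, he]

theorem restrict_upperWeight (w : G.E → ℝ) (Q : Finset G.E) (ε : ℝ) (e : G.E) :
    (G.restrict w Q).upperWeight ε e = if e ∈ Q then w e else G.upperWeight ε e := by
  by_cases he : e ∈ Q <;> simp [restrict, upperWeight, he]

theorem eventually_lowerWeight_le_restrict {w : G.E → ℝ} (hw : G.Valid w) (Q : Finset G.E) :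
    ∀ᶠ ε in 𝓝[>] 0, ∀ e, G.lowerWeight ε e ≤ (G.restrict w Q).lowerWeight ε e := by
  refine eventually_all.2 fun e => ?_
  simp only [restrict_lowerWeight]
  split_ifs
  · exact eventually_lowerWeight_le (hw e)
  · exact .of_forall fun _ => le_rfl

theorem eventually_restrict_upperWeight_le {w : G.E → ℝ} (hw : G.Valid w) (Q : Finset G.E) :
    ∀ᶠ ε in 𝓝[>] 0, ∀ e : G.E, (G.restrict w Q).upperWeight ε e ≤ G.upperWeight ε e := by
  refine eventually_all.2 fun e => ?_
  simp only [restrict_upperWeight]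
  split_ifs
  · exact eventually_le_upperWeight (hw e)
  · exact .of_forall fun _ => le_rfl

end UncGraph

open UncGraph

/-- if `G` has unique limit trees `T_L = T_U = T` and the
instance `G'` obtained by querying `Q` has unique limit trees `T_L' = T_U' = T'`,
then every edge of the symmetric difference `T Δ T'` lies in `Q`. -/
theorem limit_tree_change_implies_queried
    (G : UncGraph) (w : G.E → ℝ) (hw : G.Valid w)
    (Q : Finset G.E) (T T' : Finset G.E)
    (hT : G.UniqueLimitTrees T)
    (hT' : (G.restrict w Q).UniqueLimitTrees T') :
    ∀ e ∈ (T \ T') ∪ (T' \ T), e ∈ Q := by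
  obtain ⟨hTL, hTU⟩ := uniqueLimitTrees_iff.1 hT
  obtain ⟨hT'L, hT'U⟩ := uniqueLimitTrees_iff.1 hT'
  intro e he
  by_contra heQ
  simp only [Finset.mem_union, Finset.mem_sdiff] at he
  rcases he with ⟨heT, heT'⟩ | ⟨heT', heT⟩
  · exact heT' <| hTL.mem_of_mem_of_le (lowerWeight_add_lowerWeight G)
      (lowerWeight_add_lowerWeight (G.restrict w Q)) hT'L (eventually_lowerWeight_le_restrict hw Q)
      (fun ε => by simp [restrict_lowerWeight, heQ]) heT
  · exact heT <| hT'U.mem_of_mem_of_le (upperWeight_add_upperWeight (G.restrict w Q))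
      (upperWeight_add_upperWeight G) hTU (eventually_restrict_upperWeight_le hw Q)
      (fun ε => by simp [restrict_upperWeight, heQ]) heT'
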